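/- arXiv:0710.1254 — 7 statements merged into one kernel-verified Lean document; each statement's English description precedes it below -/
import Mathlib

section
/- (Special Isomorphism Theorem.) Let G be a group. The map sending each subgroup H ≤ G to its right-coset setoid rightRel H is an injective lattice homomorphism from the lattice of subgroups of G into the lattice of setoids on G: for all subgroups H, K of G one has rightRel (H ⊓ K) = rightRel H ⊓ rightRel K and rightRel (H ⊔ K) = rightRel H ⊔ rightRel K, and rightRel H = rightRel K implies H = K. -/
/-!
`rightRel` is the left adjoint of `r ↦ r.mulLeftFixingSubgroup`, the elements whose
left multiplication keeps every point in its class: `rightRel H ≤ r` says exactly that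
`z ~ g * z` for all `g ∈ H`. Being a left adjoint, `rightRel` preserves joins, and since
the fixing subgroup of `rightRel H` is `H` again, it is injective.
-/

open QuotientGroup

namespace Setoid

variable {G : Type*} [Group G]

def mulLeftFixingSubgroup (r : Setoid G) : Subgroup G where
  carrier := {g | ∀ z, r z (g * z)}
  one_mem' z := by simpa only [one_mul] using r.refl z
  mul_mem' {a b} ha hb z := by
    simpa only [mul_assoc] using r.trans (hb z) (ha (b * z))
  inv_mem' {a} ha z := by
    simpa only [mul_inv_cancel_left] using r.symm (ha (a⁻¹ * z))

theorem mem_mulLeftFixingSubgroup {r : Setoid G} {g : G} :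
    g ∈ r.mulLeftFixingSubgroup ↔ ∀ z, r z (g * z) :=
  Iff.rfl

end Setoid

namespace QuotientGroup

variable {G : Type*} [Group G]

theorem rightRel_inf (H K : Subgroup G) : rightRel (H ⊓ K) = rightRel H ⊓ rightRel K := by
  ext x y
  simp only [Setoid.inf_iff_and, rightRel_apply, Subgroup.mem_inf]

theorem gc_rightRel_mulLeftFixingSubgroup :
    GaloisConnection (rightRel : Subgroup G → Setoid G) Setoid.mulLeftFixingSubgroup := by
  intro H r
  constructor
  · intro hle g hg z
    exact hle (by rwa [rightRel_apply, mul_inv_cancel_right])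
  · intro hle x y hxy
    rw [rightRel_apply] at hxy
    simpa only [inv_mul_cancel_right] using hle hxy x

theorem mulLeftFixingSubgroup_rightRel (H : Subgroup G) :
    (rightRel H).mulLeftFixingSubgroup = H := by
  ext g
  rw [Setoid.mem_mulLeftFixingSubgroup]
  simp only [rightRel_apply, mul_inv_cancel_right, forall_const]

def rightRelGaloisCoinsertion :
    GaloisCoinsertion (rightRel : Subgroup G → Setoid G) Setoid.mulLeftFixingSubgroup :=
  gc_rightRel_mulLeftFixingSubgroup.toGaloisCoinsertion fun H =>
    (mulLeftFixingSubgroup_rightRel H).le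

end QuotientGroup

/-- Special Isomorphism Theorem: `H ↦ rightRel H` is an injective lattice
homomorphism from the subgroup lattice of `G` into the lattice of setoids on `G`. -/
theorem stmt_4 (G : Type*) [Group G] :
    (∀ H K : Subgroup G,
        QuotientGroup.rightRel (H ⊓ K) =
          QuotientGroup.rightRel H ⊓ QuotientGroup.rightRel K) ∧
    (∀ H K : Subgroup G,
        QuotientGroup.rightRel (H ⊔ K) =
          QuotientGroup.rightRel H ⊔ QuotientGroup.rightRel K) ∧
    Function.Injective (fun H : Subgroup G => QuotientGroup.rightRel H) :=
  ⟨rightRel_inf, fun _ _ => gc_rightRel_mulLeftFixingSubgroup.l_sup,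
    rightRelGaloisCoinsertion.l_injective⟩
end

section
/- Let Ω be a finite set and s, t setoids on Ω, with partition-stabilizer subgroups G_s, G_t ≤ Equiv.Perm Ω. Then G_{s ⊓ t} = G_s ⊓ G_t and G_{s ⊔ t} = G_s ⊔ G_t; that is, the stabilizer of the common refinement is the intersection of the stabilizers, and the stabilizer of the finest common coarsening is the subgroup generated by the two stabilizers. -/
/-!
Both stabilizers contain every transposition of two points in a common class, and conversely
`swap x y ∈ H` is an equivalence relation on points for any subgroup `H` (transitivity by
conjugating one transposition by another). So `s ⊔ t` is finer than the relation "the swap lies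
in `G_s ⊔ G_t`". On a finite set a partition stabilizer is generated by the transpositions it
contains: peeling off `swap x (σ x)` shrinks the support of `σ`.
-/

/-- The partition-stabilizer subgroup of a setoid `s`: all permutations of `Ω`
moving every point only within its `s`-class. -/
def partitionStabilizer {Ω : Type*} (s : Setoid Ω) : Subgroup (Equiv.Perm Ω) where
  carrier := {σ : Equiv.Perm Ω | ∀ x : Ω, s.r (σ x) x}
  one_mem' := fun x => s.iseqv.refl x
  mul_mem' := by
    intro σ τ hσ hτ x
    exact s.iseqv.trans (hσ (τ x)) (hτ x)
  inv_mem' := by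
    intro σ hσ x
    have h := hσ (σ⁻¹ x)
    rw [show σ (σ⁻¹ x) = x from σ.apply_symm_apply x] at h
    exact s.iseqv.symm h

open Equiv Equiv.Perm

section

variable {Ω : Type*}

theorem partitionStabilizer_mono : Monotone (partitionStabilizer (Ω := Ω)) :=
  fun _ _ hrs _ hσ x => hrs (hσ x)

theorem partitionStabilizer_inf (s t : Setoid Ω) :
    partitionStabilizer (s ⊓ t) = partitionStabilizer s ⊓ partitionStabilizer t := by
  ext σ
  exact forall_and

theorem swap_mem_partitionStabilizer [DecidableEq Ω] {s : Setoid Ω} {x y : Ω} (h : s x y) :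
    swap x y ∈ partitionStabilizer s := by
  intro z
  rw [swap_apply_def]
  split_ifs with hzx hzy
  · exact hzx ▸ s.symm h
  · exact hzy ▸ h
  · exact s.refl z

theorem swap_mem_of_swap_mem_of_swap_mem [DecidableEq Ω] {H : Subgroup (Perm Ω)} {x y z : Ω}
    (hxy : swap x y ∈ H) (hyz : swap y z ∈ H) : swap x z ∈ H := by
  rcases eq_or_ne x y with rfl | hxy'
  · exact hyz
  rcases eq_or_ne x z with rfl | hxz
  · rw [swap_self]; exact H.one_mem
  have hconj : swap x z = swap y z * swap x y * swap y z := by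
    have := swap_apply_apply (swap y z) x y
    rwa [swap_apply_of_ne_of_ne hxy' hxz, swap_apply_left, swap_inv] at this
  rw [hconj]
  exact H.mul_mem (H.mul_mem hyz hxy) hyz

def Subgroup.swapSetoid [DecidableEq Ω] (H : Subgroup (Perm Ω)) : Setoid Ω where
  r x y := swap x y ∈ H
  iseqv :=
    { refl := fun x => by rw [swap_self]; exact H.one_mem
      symm := fun h => by rwa [swap_comm]
      trans := swap_mem_of_swap_mem_of_swap_mem }

theorem partitionStabilizer_le_of_le_swapSetoid [Fintype Ω] [DecidableEq Ω] {s : Setoid Ω}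
    {H : Subgroup (Perm Ω)} (hs : s ≤ H.swapSetoid) : partitionStabilizer s ≤ H := by
  intro σ hσ
  induction hn : σ.support.card using Nat.strong_induction_on generalizing σ with
  | _ n ih =>
    obtain rfl | ⟨x, hx⟩ : σ = 1 ∨ ∃ x, σ x ≠ x := by
      simpa only [Perm.ext_iff, Perm.one_apply, not_forall] using em (σ = 1)
    · exact H.one_mem
    have hswap : swap x (σ x) ∈ H := hs (s.symm (hσ x))
    have hrest : swap x (σ x) * σ ∈ partitionStabilizer s :=
      mul_mem (swap_mem_partitionStabilizer (s.symm (hσ x))) hσ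
    rw [← swap_mul_self_mul x (σ x) σ]
    exact H.mul_mem hswap (ih _ (hn ▸ card_support_swap_mul hx) hrest rfl)

theorem partitionStabilizer_sup [Fintype Ω] (s t : Setoid Ω) :
    partitionStabilizer (s ⊔ t) = partitionStabilizer s ⊔ partitionStabilizer t := by
  classical
  refine le_antisymm (partitionStabilizer_le_of_le_swapSetoid (sup_le ?_ ?_))
    (sup_le (partitionStabilizer_mono le_sup_left) (partitionStabilizer_mono le_sup_right))
  · exact fun _ _ h => Subgroup.mem_sup_left (swap_mem_partitionStabilizer h)
  · exact fun _ _ h => Subgroup.mem_sup_right (swap_mem_partitionStabilizer h)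

end

/-- On a finite set, the partition stabilizer of the common refinement is the
intersection of the stabilizers, and the partition stabilizer of the finest
common coarsening is the subgroup generated by the two stabilizers. -/
theorem stmt_7 {Ω : Type*} [Fintype Ω] (s t : Setoid Ω) :
    partitionStabilizer (s ⊓ t) = partitionStabilizer s ⊓ partitionStabilizer t ∧
    partitionStabilizer (s ⊔ t) = partitionStabilizer s ⊔ partitionStabilizer t :=
  ⟨partitionStabilizer_inf s t, partitionStabilizer_sup s t⟩
end

section
/- Let a group G act on a set A and let H, K be subgroups of G (acting on A by restriction). Then the orbit setoid of the action of H ⊔ K (the subgroup generated by H ∪ K) on A equals the join, in the lattice of setoids on A, of the orbit setoids of H and of K: orbitRel(H ⊔ K) = orbitRel(H) ⊔ orbitRel(K). -/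
/-!
A setoid `s` on `A` determines the subgroup of those `g` with `g • a ≈ a` for every `a`, and
`orbitRel H A ≤ s` holds exactly when `H` lies in that subgroup. Hence `H ↦ orbitRel H A` is the
lower adjoint of a Galois connection between subgroups and setoids, and lower adjoints preserve
joins.
-/

namespace MulAction

variable {G A : Type*} [Group G] [MulAction G A]

def setoidInvariantSubgroup (s : Setoid A) : Subgroup G where
  carrier := {g | ∀ a, s (g • a) a}
  one_mem' a := by simpa only [one_smul] using s.refl a
  mul_mem' {x y} hx hy a := by simpa only [mul_smul] using s.trans (hx (y • a)) (hy a)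
  inv_mem' {x} hx a := by simpa only [smul_inv_smul] using s.symm (hx (x⁻¹ • a))

theorem orbitRel_le_iff_le_setoidInvariantSubgroup {H : Subgroup G} {s : Setoid A} :
    orbitRel H A ≤ s ↔ H ≤ setoidInvariantSubgroup s := by
  constructor
  · intro hle g hg a
    exact hle ⟨⟨g, hg⟩, rfl⟩
  · rintro hle a b ⟨⟨g, hg⟩, rfl⟩
    exact hle hg b

theorem gc_orbitRel_setoidInvariantSubgroup :
    GaloisConnection (fun H : Subgroup G => orbitRel H A) setoidInvariantSubgroup :=
  fun _ _ => orbitRel_le_iff_le_setoidInvariantSubgroup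

end MulAction

/-- For a group `G` acting on `A` and subgroups `H, K ≤ G`, the orbit setoid of
the action of `H ⊔ K` on `A` is the join of the orbit setoids of `H` and `K`
in the lattice of setoids on `A`. -/
theorem stmt_8 {G A : Type*} [Group G] [MulAction G A] (H K : Subgroup G) :
    MulAction.orbitRel (H ⊔ K : Subgroup G) A =
      MulAction.orbitRel H A ⊔ MulAction.orbitRel K A :=
  MulAction.gc_orbitRel_setoidInvariantSubgroup.l_sup
end

section
/- Let G be a finite group equipped with the uniform probability measure p(g) = 1/|G|, let G₁, …, G_n be subgroups of G, and let s_i be the right-coset setoid of G_i. Then the entropy of the joint information element equals the log-index of the intersection, H_p(⨅_{i∈[n]} s_i) = log(|G| / |⨅_{i∈[n]} G_i|), and the entropy of the common information element equals the log-index of the generated subgroup, H_p(⨆_{i∈[n]} s_i) = log(|G| / |⨆_{i∈[n]} G_i|). -/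
/-!
The right-coset setoid `rightRel` turns meets and joins of subgroups into meets and joins of
setoids. For meets this is immediate; for joins, `rightRel` is the lower adjoint of a Galois
connection, whose upper adjoint sends a setoid `s` to the subgroup of those `g` with `s z (g * z)`
for all `z`. Every class of `rightRel H` is a right coset, of size `|H|`, so under the uniform
measure the partition consists of `|G| / |H|` classes of probability `|H| / |G|` each, and its
entropy is `log (|G| / |H|)`.
-/

open Classical in
/-- Probability of the equivalence class `c` of the setoid `s`. -/
noncomputable def classProb {Ω : Type*} [Fintype Ω] (p : Ω → ℝ) (s : Setoid Ω)
    (c : Quotient s) : ℝ :=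
  ∑ ω ∈ Finset.univ.filter (fun ω => (⟦ω⟧ : Quotient s) = c), p ω

open Classical in
/-- Shannon entropy of the partition induced by the setoid `s`
(with the convention `0 · log 0 = 0`). -/
noncomputable def entropy {Ω : Type*} [Fintype Ω] (p : Ω → ℝ) (s : Setoid Ω) : ℝ :=
  -∑ c : Quotient s, classProb p s c * Real.log (classProb p s c)

open Finset in
theorem entropy_uniform_of_card_class_eq {Ω : Type*} [Fintype Ω] (s : Setoid Ω) (k : ℕ)
    (hk : ∀ c : Quotient s, Nat.card {ω // (⟦ω⟧ : Quotient s) = c} = k) :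
    entropy (fun _ : Ω => (Fintype.card Ω : ℝ)⁻¹) s = Real.log (Fintype.card Ω / k) := by
  classical
  have hk' (c : Quotient s) : #{ω | (⟦ω⟧ : Quotient s) = c} = k := by
    rw [← hk, Nat.card_eq_fintype_card, Fintype.card_subtype]
  have hcard : (Fintype.card Ω : ℝ) = Fintype.card (Quotient s) * k := by
    rw [← card_univ, card_eq_sum_card_fiberwise (f := Quotient.mk s) (t := univ)
      (fun _ _ => mem_univ _)]
    simp [hk']
  have hprob (c) : classProb (fun _ : Ω => (Fintype.card Ω : ℝ)⁻¹) s c = k / Fintype.card Ω := by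
    rw [classProb, sum_const, hk', nsmul_eq_mul, div_eq_mul_inv]
  simp only [entropy, hprob, sum_const, card_univ, nsmul_eq_mul]
  rcases eq_or_ne (Fintype.card Ω : ℝ) 0 with h0 | h0
  · simp [h0]
  · have hmass : (Fintype.card (Quotient s) : ℝ) * (k / Fintype.card Ω) = 1 := by
      rw [mul_div_assoc', ← hcard, div_self h0]
    rw [← mul_assoc, hmass, one_mul, ← Real.log_inv, inv_div]

namespace Setoid

variable {G : Type*} [Group G]

def leftMulSubgroup (s : Setoid G) : Subgroup G where
  carrier := {g | ∀ z, s z (g * z)}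
  one_mem' z := by simp
  mul_mem' {a b} ha hb z := s.trans (hb z) (by simpa [mul_assoc] using ha (b * z))
  inv_mem' {a} ha z := s.symm (by simpa using ha (a⁻¹ * z))

end Setoid

namespace QuotientGroup

variable {G : Type*} [Group G]

theorem gc_rightRel_leftMulSubgroup :
    GaloisConnection (rightRel : Subgroup G → Setoid G) Setoid.leftMulSubgroup := by
  intro H s
  refine ⟨fun h g hg z => h ?_, fun h x y hxy => ?_⟩
  · simpa [rightRel_apply] using hg
  · simpa using h (rightRel_apply.1 hxy) x

theorem rightRel_iSup {ι : Sort*} (H : ι → Subgroup G) :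
    rightRel (⨆ i, H i) = ⨆ i, rightRel (H i) :=
  gc_rightRel_leftMulSubgroup.l_iSup

theorem rightRel_iInf {ι : Sort*} (H : ι → Subgroup G) :
    rightRel (⨅ i, H i) = ⨅ i, rightRel (H i) := by
  ext x y
  rw [rightRel_apply, Subgroup.mem_iInf, iInf, Setoid.sInf_iff]
  simp [rightRel_apply]

theorem card_rightRel_class (H : Subgroup G) (c : Quotient (rightRel H)) :
    Nat.card {g // (⟦g⟧ : Quotient (rightRel H)) = c} = Nat.card H := by
  induction c using Quotient.inductionOn with
  | h x =>
    refine Nat.card_congr <| (Equiv.mulRight x⁻¹).subtypeEquiv fun y => ?_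
    rw [eq_comm, Quotient.eq, rightRel_apply]
    rfl

theorem entropy_uniform_rightRel [Fintype G] (H : Subgroup G) :
    entropy (fun _ : G => (Fintype.card G : ℝ)⁻¹) (rightRel H) =
      Real.log (Fintype.card G / Nat.card H) :=
  entropy_uniform_of_card_class_eq _ _ (card_rightRel_class H)

end QuotientGroup

/-- For a finite group `G` with the uniform measure and right-coset setoids of
subgroups `G₁, …, G_n`: the entropy of the joint information element is the
log-index of the intersection subgroup, and the entropy of the common
information element is the log-index of the generated subgroup. -/
theorem stmt_9 {G : Type*} [Group G] [Fintype G] (n : ℕ) (G' : Fin n → Subgroup G) :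
    entropy (fun _ : G => ((Fintype.card G : ℝ))⁻¹)
        (⨅ i, QuotientGroup.rightRel (G' i)) =
      Real.log ((Fintype.card G : ℝ) / (Nat.card ↥(⨅ i, G' i) : ℝ)) ∧
    entropy (fun _ : G => ((Fintype.card G : ℝ))⁻¹)
        (⨆ i, QuotientGroup.rightRel (G' i)) =
      Real.log ((Fintype.card G : ℝ) / (Nat.card ↥(⨆ i, G' i) : ℝ)) := by
  rw [← QuotientGroup.rightRel_iInf, ← QuotientGroup.rightRel_iSup]
  exact ⟨QuotientGroup.entropy_uniform_rightRel _, QuotientGroup.entropy_uniform_rightRel _⟩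
end

section
/- Let n ≥ 1 and let f : ℝ^{2(2ⁿ−1)} → ℝ be continuous, its arguments indexed by two copies of the nonempty subsets of {1, …, n}. Suppose that for every finite probability space (Ω, p) and all setoids s₁, …, s_n on Ω one has f( (H_p(⨅_{i∈α} s_i))_α , (H_p(⨆_{i∈β} s_i))_β ) ≥ 0. Then for every finite group G and all subgroups G₁, …, G_n of G one has f( (log(|G|/|⨅_{i∈α} G_i|))_α , (log(|G|/|⨆_{i∈β} G_i|))_β ) ≥ 0. -/
open QuotientGroup

section Entropy

variable {Ω : Type*} [Fintype Ω] (p : Ω → ℝ) (s : Setoid Ω)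

open Classical in
theorem sum_classProb : ∑ c, classProb p s c = ∑ ω, p ω := by
  simp only [classProb]
  convert Finset.sum_fiberwise Finset.univ (fun ω => (⟦ω⟧ : Quotient s)) p

open Classical in
theorem entropy_eq_neg_log_of_classProb_eq {q : ℝ} (hp : ∑ ω, p ω = 1)
    (hq : ∀ c, classProb p s c = q) : entropy p s = -Real.log q := by
  have hsum : ∑ _c : Quotient s, q = 1 := by
    simpa only [hq, hp] using sum_classProb p s
  simp only [entropy, hq, ← Finset.sum_mul, hsum, one_mul]

end Entropy

section LeftRel

variable {G : Type*} [Group G]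

theorem leftRel_mono : Monotone (leftRel : Subgroup G → Setoid G) :=
  fun _ _ hHK _ _ hxy => leftRel_apply.mpr (hHK (leftRel_apply.mp hxy))

theorem leftRel_iInf {ι : Sort*} (H : ι → Subgroup G) :
    leftRel (⨅ i, H i) = ⨅ i, leftRel (H i) := by
  ext x y
  rw [leftRel_apply, Subgroup.mem_iInf, iInf, Setoid.sInf_iff, Set.forall_mem_range]
  simp only [leftRel_apply]

theorem leftRel_iSup {ι : Sort*} (H : ι → Subgroup G) :
    leftRel (⨆ i, H i) = ⨆ i, leftRel (H i) := by
  refine le_antisymm (fun x y hxy => ?_) (iSup_le fun i => leftRel_mono (le_iSup H i))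
  rw [leftRel_apply] at hxy
  -- Right multiplication by an element of some `H i` is a step of `leftRel (H i)`, and the
  -- elements of `⨆ i, H i` are products of such elements.
  have rel_mul_of_mem : ∀ t ∈ ⨆ i, H i, ∀ z : G, (⨆ i, leftRel (H i)) z (z * t) := by
    intro t ht
    refine Subgroup.iSup_induction H (C := fun t => ∀ z, (⨆ i, leftRel (H i)) z (z * t)) ht
      (fun i a ha z => Setoid.le_def.mp (le_iSup (fun i => leftRel (H i)) i)
        (leftRel_apply.mpr (by simpa using ha)))
      (fun z => by simp)
      (fun a b iha ihb z => Setoid.trans' _ (iha z) (by simpa [mul_assoc] using ihb (z * a)))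
  simpa using rel_mul_of_mem _ hxy x

theorem natCard_fiber_mk (H : Subgroup G) (g : G) :
    Nat.card {x : G // (x : G ⧸ H) = g} = Nat.card H := by
  rw [← SetLike.coe_sort_coe, ← Set.natCard_smul_set g (H : Set G), ← eq_class_eq_leftCoset]
  rfl

end LeftRel

theorem sum_const_inv_natCard (α : Type*) [Fintype α] [Nonempty α] :
    ∑ _ : α, (Nat.card α : ℝ)⁻¹ = 1 := by
  rw [Finset.sum_const, Finset.card_univ, ← Nat.card_eq_fintype_card, nsmul_eq_mul,
    mul_inv_cancel₀ (by exact_mod_cast Nat.card_pos.ne')]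

section FiniteGroup

variable {G : Type*} [Group G] [Fintype G]

open Classical in
theorem classProb_uniform_leftRel (H : Subgroup G) (c : Quotient (leftRel H)) :
    classProb (fun _ : G => (Nat.card G : ℝ)⁻¹) (leftRel H) c = Nat.card H / Nat.card G := by
  induction c using Quotient.inductionOn with
  | h g =>
    rw [classProb, Finset.sum_const, nsmul_eq_mul, div_eq_mul_inv, ← natCard_fiber_mk H g,
      Nat.card_eq_fintype_card (α := {x : G // (x : G ⧸ H) = g}), Fintype.card_subtype]
    -- the two filters differ only in their decidability instances
    congr

theorem entropy_uniform_leftRel (H : Subgroup G) :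
    entropy (fun _ : G => (Nat.card G : ℝ)⁻¹) (leftRel H) = Real.log (Nat.card G / Nat.card H) := by
  rw [entropy_eq_neg_log_of_classProb_eq _ _ (sum_const_inv_natCard G)
    (classProb_uniform_leftRel H), ← Real.log_inv, inv_div]

end FiniteGroup

theorem stmt_12_general (n : ℕ)
    (f : (({α : Finset (Fin n) // α.Nonempty} ⊕ {α : Finset (Fin n) // α.Nonempty}) → ℝ) → ℝ)
    (hlaw : ∀ (Ω : Type) [Fintype Ω] (p : Ω → ℝ),
      (∀ ω, 0 ≤ p ω) → ∑ ω, p ω = 1 →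
      ∀ s : Fin n → Setoid Ω,
        0 ≤ f (Sum.elim
          (fun α => entropy p (⨅ i ∈ α.1, s i))
          (fun β => entropy p (⨆ i ∈ β.1, s i)))) :
    ∀ (G : Type) [Group G] [Fintype G] (Gs : Fin n → Subgroup G),
      0 ≤ f (Sum.elim
        (fun α => Real.log ((Nat.card G : ℝ) / (Nat.card ↥(⨅ i ∈ α.1, Gs i) : ℝ)))
        (fun β => Real.log ((Nat.card G : ℝ) / (Nat.card ↥(⨆ i ∈ β.1, Gs i) : ℝ)))) := by
  intro G _ _ Gs
  have key := hlaw G (fun _ => (Nat.card G : ℝ)⁻¹) (fun _ => by positivity)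
    (sum_const_inv_natCard G) (fun i => leftRel (Gs i))
  simp_rw [← leftRel_iInf, ← leftRel_iSup, entropy_uniform_leftRel] at key
  exact key

/-- If a continuous law holds for the entropies of all joint and common
information elements of any `n` information elements, then the same law holds
for the log-indices of intersections and joins of any `n` subgroups of any
finite group. -/
theorem stmt_12 (n : ℕ) (hn : 1 ≤ n)
    (f : (({α : Finset (Fin n) // α.Nonempty} ⊕ {α : Finset (Fin n) // α.Nonempty}) → ℝ) → ℝ)
    (hf : Continuous f)
    (hlaw : ∀ (Ω : Type) [Fintype Ω] (p : Ω → ℝ),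
      (∀ ω, 0 ≤ p ω) → ∑ ω, p ω = 1 →
      ∀ s : Fin n → Setoid Ω,
        0 ≤ f (Sum.elim
          (fun α => entropy p (⨅ i ∈ α.1, s i))
          (fun β => entropy p (⨆ i ∈ β.1, s i)))) :
    ∀ (G : Type) [Group G] [Fintype G] (Gs : Fin n → Subgroup G),
      0 ≤ f (Sum.elim
        (fun α => Real.log ((Nat.card G : ℝ) / (Nat.card ↥(⨅ i ∈ α.1, Gs i) : ℝ)))
        (fun β => Real.log ((Nat.card G : ℝ) / (Nat.card ↥(⨆ i ∈ β.1, Gs i) : ℝ)))) :=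
  stmt_12_general n f hlaw
end

section
/- Let n ≥ 1 and let f : ℝ^{2(2ⁿ−1)} → ℝ be continuous, its arguments indexed by two copies of the nonempty subsets of {1, …, n}. Suppose that for every N ≥ 1 and all subgroups H₁, …, H_n of Equiv.Perm (Fin N) one has f( ((1/N)·log(N!/|⨅_{i∈α} H_i|))_α , ((1/N)·log(N!/|⨆_{i∈β} H_i|))_β ) ≥ 0. Then for every finite probability space (Ω, p) and all setoids s₁, …, s_n on Ω one has f( (H_p(⨅_{i∈α} s_i))_α , (H_p(⨆_{i∈β} s_i))_β ) ≥ 0. -/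
open Equiv Real Filter Topology

namespace Subgroup

variable {X : Type*} [DecidableEq X]

def swapSetoid_s13 (K : Subgroup (Perm X)) : Setoid X where
  r x y := swap x y ∈ K
  iseqv := ⟨fun x => by rw [swap_self]; exact K.one_mem, fun h => by rwa [swap_comm],
    fun h₁ h₂ => SubmonoidClass.swap_mem_trans K h₁ h₂⟩

theorem mem_of_forall_swap_mem [Finite X] {K : Subgroup (Perm X)} {g : Perm X}
    (h : ∀ x, swap x (g x) ∈ K) : g ∈ K := by
  let S : Set (Perm X) := {σ | σ ∈ K ∧ σ.IsSwap}
  have hSK : closure S ≤ K := (closure_le K).2 fun _ hσ => hσ.1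
  refine hSK ((mem_closure_isSwap fun _ hσ => hσ.2).2 ⟨Set.toFinite _, fun x => ?_⟩)
  by_cases hx : g x = x
  · rw [hx]; exact MulAction.mem_orbit_self x
  · exact ⟨⟨swap x (g x), subset_closure ⟨h x, x, g x, Ne.symm hx, rfl⟩⟩, swap_apply_left x (g x)⟩

end Subgroup

namespace Setoid

variable {X Ω : Type*}

theorem iInf_rel_iff {ι : Sort*} (r : ι → Setoid X) (x y : X) :
    (⨅ i, r i) x y ↔ ∀ i, r i x y := by
  rw [iInf, sInf_def]; simp

def permSubgroup (r : Setoid X) : Subgroup (Perm X) where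
  carrier := {g | ∀ x, r (g x) x}
  mul_mem' ha hb x := r.trans (ha _) (hb x)
  one_mem' := r.refl
  inv_mem' {g} hg x := by simpa using r.symm (hg (g⁻¹ x))

@[simp]
theorem mem_permSubgroup {r : Setoid X} {g : Perm X} : g ∈ r.permSubgroup ↔ ∀ x, r (g x) x :=
  Iff.rfl

theorem permSubgroup_mono {r r' : Setoid X} (h : r ≤ r') : r.permSubgroup ≤ r'.permSubgroup :=
  fun _ hg x => h (hg x)

theorem swap_mem_permSubgroup {r : Setoid X} {x y : X} [DecidableEq X] (h : r x y) :
    swap x y ∈ r.permSubgroup := by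
  intro z
  rcases eq_or_ne z x with rfl | hzx
  · simpa using r.symm h
  rcases eq_or_ne z y with rfl | hzy
  · simpa using h
  · rw [swap_apply_of_ne_of_ne hzx hzy]

theorem permSubgroup_iInf {ι : Sort*} (r : ι → Setoid X) :
    (⨅ i, r i).permSubgroup = ⨅ i, (r i).permSubgroup := by
  ext g
  simp only [mem_permSubgroup, iInf_rel_iff, Subgroup.mem_iInf]
  exact forall_comm

theorem permSubgroup_iSup [Finite X] {ι : Sort*} (r : ι → Setoid X) :
    (⨆ i, r i).permSubgroup = ⨆ i, (r i).permSubgroup := by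
  classical
  refine le_antisymm (fun g hg => ?_) (iSup_le fun i => permSubgroup_mono (le_iSup r i))
  have hle : (⨆ i, r i) ≤ (⨆ i, (r i).permSubgroup).swapSetoid_s13 :=
    iSup_le fun i _ _ h => le_iSup (fun i => (r i).permSubgroup) i (swap_mem_permSubgroup h)
  exact Subgroup.mem_of_forall_swap_mem fun x => hle ((⨆ i, r i).symm (hg x))

theorem comap_iInf {ι : Sort*} (φ : X → Ω) (r : ι → Setoid Ω) :
    (⨅ i, r i).comap φ = ⨅ i, (r i).comap φ :=
  ext fun x y => by simp only [comap_rel, iInf_rel_iff]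

theorem comap_iSup_of_surjective {ι : Sort*} [Nonempty ι] {φ : X → Ω}
    (hφ : Function.Surjective φ) (r : ι → Setoid Ω) :
    (⨆ i, r i).comap φ = ⨆ i, (r i).comap φ := by
  set R := ⨆ i, (r i).comap φ
  refine le_antisymm ?_ (iSup_le fun i x y h => le_iSup r i h)
  have hker : ker φ ≤ R := fun x y h =>
    le_iSup (fun i => (r i).comap φ) (Classical.arbitrary ι) (by rw [comap_rel, ker_def.1 h])
  have hmap : (⨆ i, r i) ≤ R.map φ := iSup_le fun i ω ω' h => by
    obtain ⟨x, rfl⟩ := hφ ω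
    obtain ⟨y, rfl⟩ := hφ ω'
    exact le_comap_map (le_iSup (fun i => (r i).comap φ) i h)
  rw [← comap_map_of_ker_le φ R hker]
  exact fun x y h => hmap h

theorem permSubgroup_comap_biInf {ι : Type*} (φ : X → Ω) (s : ι → Setoid Ω) (α : Finset ι) :
    ((⨅ i ∈ α, s i).comap φ).permSubgroup = ⨅ i ∈ α, ((s i).comap φ).permSubgroup := by
  simp only [comap_iInf, permSubgroup_iInf]

theorem permSubgroup_comap_biSup [Finite X] {ι : Type*} {φ : X → Ω} (hφ : Function.Surjective φ)
    (s : ι → Setoid Ω) {β : Finset ι} (hβ : β.Nonempty) :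
    ((⨆ i ∈ β, s i).comap φ).permSubgroup = ⨆ i ∈ β, ((s i).comap φ).permSubgroup := by
  have := hβ.to_subtype
  rw [iSup_subtype', iSup_subtype', comap_iSup_of_surjective hφ, permSubgroup_iSup]

open Classical in
theorem card_permSubgroup_comap [Fintype X] [Fintype Ω] (φ : X → Ω) (s : Setoid Ω) :
    Nat.card (s.comap φ).permSubgroup =
      ∏ c : Quotient s, (Nat.card {x // (⟦φ x⟧ : Quotient s) = c}).factorial := by
  simp only [Nat.card_eq_fintype_card]
  rw [← DomMulAct.stabilizer_card, ← Nat.card_eq_fintype_card, ← Nat.card_eq_fintype_card]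
  refine Nat.card_congr (Equiv.subtypeEquivRight fun g => ?_)
  simp only [mem_permSubgroup, comap_rel, funext_iff, Function.comp_apply, Quotient.eq]

end Setoid

theorem exists_fin_fiber_card {Ω : Type*} [Fintype Ω] (a : Ω → ℕ) :
    ∃ φ : Fin (∑ ω, a ω) → Ω, ∀ ω, Nat.card {x // φ x = ω} = a ω := by
  let e : Fin (∑ ω, a ω) ≃ Σ ω, Fin (a ω) :=
    Fintype.equivOfCardEq (by simp [Fintype.card_sigma])
  refine ⟨fun x => (e x).1, fun ω => ?_⟩
  rw [Nat.card_congr ((e.subtypeEquiv fun _ => Iff.rfl).trans (Equiv.sigmaSubtype ω)),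
    Nat.card_eq_fintype_card, Fintype.card_fin]

theorem card_subtype_comp_eq_sum {X Ω Y : Type*} [Fintype X] [Fintype Ω] [DecidableEq Y]
    (φ : X → Ω) (g : Ω → Y) (y : Y) :
    Nat.card {x // g (φ x) = y} =
      ∑ ω ∈ Finset.univ.filter (g · = y), Nat.card {x // φ x = ω} := by
  classical
  simp only [Nat.card_eq_fintype_card, Fintype.card_subtype]
  rw [Finset.card_eq_sum_card_fiberwise (f := φ) (t := Finset.univ.filter (g · = y))
    fun x hx => by simpa using hx]
  refine Finset.sum_congr rfl fun ω hω => congrArg Finset.card ?_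
  ext x
  simp only [Finset.mem_filter, Finset.mem_univ, true_and, and_iff_right_iff_imp]
  rintro rfl
  simpa using hω

noncomputable def logFactorialRemainder (n : ℕ) : ℝ := log n.factorial - (n * log n - n)

theorem logFactorialRemainder_zero : logFactorialRemainder 0 = 0 := by
  simp [logFactorialRemainder]

theorem logFactorialRemainder_monotone : Monotone logFactorialRemainder := by
  refine monotone_nat_of_le_succ fun n => ?_
  rcases Nat.eq_zero_or_pos n with rfl | hn
  · simp [logFactorialRemainder]
  have hn' : (0 : ℝ) < n := by exact_mod_cast hn
  have hlog : log (n + 1) - log n ≤ 1 / n := by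
    rw [← log_div (by positivity) hn'.ne']
    calc log ((n + 1) / n) ≤ (n + 1) / n - 1 := log_le_sub_one_of_pos (by positivity)
      _ = 1 / n := by field_simp; ring
  have hstep : log ((n + 1).factorial : ℕ) = log (n + 1) + log n.factorial := by
    rw [Nat.factorial_succ, Nat.cast_mul, log_mul (by positivity) (by positivity)]; push_cast; ring
  simp only [logFactorialRemainder, hstep, Nat.cast_add, Nat.cast_one]
  have : (n : ℝ) * (log (n + 1) - log n) ≤ 1 := by
    calc (n : ℝ) * (log (n + 1) - log n) ≤ n * (1 / n) := by gcongr
      _ = 1 := by field_simp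
  nlinarith

theorem logFactorialRemainder_nonneg (n : ℕ) : 0 ≤ logFactorialRemainder n :=
  logFactorialRemainder_zero ▸ logFactorialRemainder_monotone (Nat.zero_le n)

theorem tendsto_logFactorialRemainder_div :
    Tendsto (fun n : ℕ => logFactorialRemainder n / n) atTop (𝓝 0) := by
  have hstirling : Tendsto (fun n : ℕ => log (Stirling.stirlingSeq n) / n) atTop (𝓝 0) :=
    ((continuousAt_log (sqrt_pos.2 pi_pos).ne').tendsto.comp
      Stirling.tendsto_stirlingSeq_sqrt_pi).div_atTop tendsto_natCast_atTop_atTop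
  have hlog : Tendsto (fun n : ℕ => 1 / 2 * log (2 * n) / n) atTop (𝓝 0) :=
    (isLittleO_log_id_atTop.tendsto_div_nhds_zero.comp
      ((tendsto_natCast_atTop_atTop (R := ℝ)).const_mul_atTop two_pos)).congr fun n => by
        simp only [Function.comp_apply, id]; ring
  have hsum := hstirling.add hlog
  rw [zero_add] at hsum
  refine hsum.congr' ?_
  filter_upwards [eventually_ne_atTop 0] with n hn
  have hn' : (n : ℝ) ≠ 0 := Nat.cast_ne_zero.2 hn
  rw [Stirling.log_stirlingSeq_formula, log_div hn' (exp_ne_zero 1), log_exp,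
    logFactorialRemainder]
  field_simp
  ring

theorem sum_negMulLog_div_eq {γ : Type*} [Fintype γ] (w : γ → ℕ) {N : ℕ}
    (hN : ∑ c, w c = N) :
    ∑ c, negMulLog (w c / N) = (N * log N - ∑ c, w c * log (w c)) / N := by
  have hNR : ∑ c, (w c : ℝ) = N := by exact_mod_cast hN
  have hterm (c : γ) :
      negMulLog (w c / N) = (N : ℝ)⁻¹ * negMulLog (w c) + w c * ((N : ℝ)⁻¹ * log N) := by
    rw [div_eq_mul_inv, negMulLog_mul]; simp only [negMulLog, log_inv]; ring
  rw [Finset.sum_congr rfl fun c _ => hterm c]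
  simp only [Finset.sum_add_distrib, ← Finset.mul_sum, ← Finset.sum_mul, hNR, negMulLog,
    neg_mul, Finset.sum_neg_distrib]
  ring

theorem log_multinomial_div_eq {γ : Type*} [Fintype γ] (w : γ → ℕ) {N : ℕ}
    (hN : ∑ c, w c = N) :
    1 / (N : ℝ) * log (N.factorial / ∏ c, ((w c).factorial : ℝ)) = ∑ c, negMulLog (w c / N) +
      (logFactorialRemainder N - ∑ c, logFactorialRemainder (w c)) / N := by
  have hNR : ∑ c, (w c : ℝ) = N := by exact_mod_cast hN
  have hlog_fac (k : ℕ) : log (k.factorial : ℝ) = logFactorialRemainder k + (k * log k - k) := by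
    rw [logFactorialRemainder]; ring
  rw [sum_negMulLog_div_eq w hN, log_div (by positivity) (by positivity),
    log_prod (fun c _ => by positivity)]
  simp only [hlog_fac, Finset.sum_add_distrib, Finset.sum_sub_distrib, hNR]
  ring

theorem tendsto_log_multinomial_div {γ : Type*} [Fintype γ] (N : ℕ → ℕ) (w : ℕ → γ → ℕ)
    (q : γ → ℝ) (hsum : ∀ m, ∑ c, w m c = N m) (hN : Tendsto N atTop atTop)
    (hw : ∀ c, Tendsto (fun m => (w m c : ℝ) / N m) atTop (𝓝 (q c))) :
    Tendsto (fun m => 1 / (N m : ℝ) * log ((N m).factorial / ∏ c, ((w m c).factorial : ℝ))) atTop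
      (𝓝 (∑ c, negMulLog (q c))) := by
  simp only [log_multinomial_div_eq _ (hsum _)]
  rw [← add_zero (∑ c, negMulLog (q c))]
  refine (tendsto_finsetSum _ fun c _ => (continuous_negMulLog.tendsto _).comp (hw c)).add ?_
  set r := fun m => logFactorialRemainder (N m) / N m
  have hr : Tendsto r atTop (𝓝 0) := tendsto_logFactorialRemainder_div.comp hN
  have hbound (m : ℕ) : 0 ≤ ∑ c, logFactorialRemainder (w m c) ∧
      ∑ c, logFactorialRemainder (w m c) ≤ Fintype.card γ * logFactorialRemainder (N m) := by
    refine ⟨Finset.sum_nonneg fun c _ => logFactorialRemainder_nonneg _, ?_⟩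
    rw [← nsmul_eq_mul, ← Finset.card_univ, ← Finset.sum_const]
    exact Finset.sum_le_sum fun c _ => logFactorialRemainder_monotone
      (hsum m ▸ Finset.single_le_sum (fun _ _ => Nat.zero_le _) (Finset.mem_univ c))
  have hlower := hr.const_mul (-(Fintype.card γ : ℝ))
  rw [mul_zero] at hlower
  refine tendsto_of_tendsto_of_tendsto_of_le_of_le hlower hr (fun m => ?_) (fun m => ?_)
  · simp only [r, mul_div_assoc']
    gcongr
    linarith [hbound m, logFactorialRemainder_nonneg (N m)]
  · simp only [r]
    gcongr
    linarith [hbound m]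

open Classical in
theorem entropy_eq_sum_negMulLog {Ω : Type*} [Fintype Ω] (p : Ω → ℝ) (s : Setoid Ω) :
    entropy p s = ∑ c, negMulLog (classProb p s c) := by
  simp only [entropy, negMulLog, neg_mul, Finset.sum_neg_distrib]

open Classical in
theorem tendsto_logIndex_permSubgroup_comap {Ω : Type*} [Fintype Ω] {X : ℕ → Type*}
    [∀ m, Fintype (X m)] (φ : ∀ m, X m → Ω) (p : Ω → ℝ)
    (hX : Tendsto (fun m => Nat.card (X m)) atTop atTop)
    (hφ : ∀ ω, Tendsto (fun m => (Nat.card {x // φ m x = ω} : ℝ) / Nat.card (X m)) atTop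
      (𝓝 (p ω)))
    (s : Setoid Ω) :
    Tendsto (fun m => 1 / (Nat.card (X m) : ℝ) *
        log ((Nat.card (X m)).factorial / Nat.card ((s.comap (φ m)).permSubgroup)))
      atTop (𝓝 (entropy p s)) := by
  simp only [Setoid.card_permSubgroup_comap, Nat.cast_prod, entropy_eq_sum_negMulLog]
  refine tendsto_log_multinomial_div _ _ _ (fun m => ?_) hX fun c => ?_
  · rw [← Nat.card_sigma, Nat.card_congr (Equiv.sigmaFiberEquiv _)]
  · simp only [card_subtype_comp_eq_sum (φ _) (fun ω => (⟦ω⟧ : Quotient s)) c, Nat.cast_sum,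
      Finset.sum_div, classProb]
    exact tendsto_finsetSum _ fun ω _ => hφ ω

theorem le_sum_floor_mul_add_one {Ω : Type*} [Fintype Ω] {p : Ω → ℝ} (hp : ∑ ω, p ω = 1)
    (m : ℕ) : m ≤ ∑ ω, (⌊m * p ω⌋₊ + 1) := by
  have : (m : ℝ) ≤ ∑ ω, ((⌊m * p ω⌋₊ + 1 : ℕ) : ℝ) :=
    calc (m : ℝ) = ∑ ω, m * p ω := by rw [← Finset.mul_sum, hp, mul_one]
      _ ≤ _ := Finset.sum_le_sum fun ω _ => by push_cast; exact (Nat.lt_floor_add_one _).le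
  exact_mod_cast this

theorem tendsto_floor_mul_add_one_div_sum {Ω : Type*} [Fintype Ω] {p : Ω → ℝ}
    (hp : ∀ ω, 0 ≤ p ω) (hsum : ∑ ω, p ω = 1) (ω : Ω) :
    Tendsto (fun m : ℕ => ((⌊m * p ω⌋₊ + 1 : ℕ) : ℝ) / ((∑ ω', (⌊m * p ω'⌋₊ + 1) : ℕ) : ℝ))
      atTop (𝓝 (p ω)) := by
  have hfloor (ω : Ω) :
      Tendsto (fun m : ℕ => ((⌊m * p ω⌋₊ + 1 : ℕ) : ℝ) / m) atTop (𝓝 (p ω)) := by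
    have h := ((tendsto_nat_floor_mul_div_atTop (hp ω)).comp
      tendsto_natCast_atTop_atTop).add tendsto_one_div_atTop_nhds_zero_nat
    rw [add_zero] at h
    refine h.congr fun m => ?_
    simp only [Function.comp_apply, mul_comm (p ω)]
    push_cast
    ring
  have htotal : Tendsto (fun m : ℕ => ((∑ ω', (⌊m * p ω'⌋₊ + 1) : ℕ) : ℝ) / m) atTop (𝓝 1) := by
    have h := tendsto_finsetSum Finset.univ fun ω _ => hfloor ω
    rw [hsum] at h
    exact h.congr fun m => by rw [Nat.cast_sum, Finset.sum_div]
  have h := (hfloor ω).div htotal one_ne_zero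
  rw [div_one] at h
  refine h.congr' ?_
  filter_upwards [eventually_ne_atTop 0] with m hm
  rw [Pi.div_apply, div_div_div_cancel_right₀ (Nat.cast_ne_zero.2 hm)]

theorem stmt_13_general (n : ℕ)
    (f : (({α : Finset (Fin n) // α.Nonempty} ⊕ {α : Finset (Fin n) // α.Nonempty}) → ℝ) → ℝ)
    (hf : Continuous f)
    (hlaw : ∀ N : ℕ, 1 ≤ N → ∀ H : Fin n → Subgroup (Equiv.Perm (Fin N)),
      0 ≤ f (Sum.elim
        (fun α => (1 / (N : ℝ)) *
          Real.log ((Nat.factorial N : ℝ) / (Nat.card ↥(⨅ i ∈ α.1, H i) : ℝ)))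
        (fun β => (1 / (N : ℝ)) *
          Real.log ((Nat.factorial N : ℝ) / (Nat.card ↥(⨆ i ∈ β.1, H i) : ℝ))))) :
    ∀ (Ω : Type) [Fintype Ω] (p : Ω → ℝ),
      (∀ ω, 0 ≤ p ω) → ∑ ω, p ω = 1 →
      ∀ s : Fin n → Setoid Ω,
        0 ≤ f (Sum.elim
          (fun α => entropy p (⨅ i ∈ α.1, s i))
          (fun β => entropy p (⨆ i ∈ β.1, s i))) := by
  intro Ω _ p hp hsum s
  let a : ℕ → Ω → ℕ := fun m ω => ⌊m * p ω⌋₊ + 1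
  choose φ hφ using fun m => exists_fin_fiber_card (a m)
  have hN (m : ℕ) : m ≤ ∑ ω, a m ω := le_sum_floor_mul_add_one hsum m
  have hsurj (m : ℕ) : Function.Surjective (φ m) := fun ω => by
    have hfiber : 0 < Nat.card {x // φ m x = ω} := by rw [hφ]; exact Nat.succ_pos _
    obtain ⟨⟨x, hx⟩⟩ := (Nat.card_pos_iff.1 hfiber).1
    exact ⟨x, hx⟩
  have hlim (t : Setoid Ω) := tendsto_logIndex_permSubgroup_comap φ p
    (by simpa using tendsto_atTop_mono hN tendsto_id)
    (fun ω => by simpa [hφ, a] using tendsto_floor_mul_add_one_div_sum hp hsum ω) t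
  refine ge_of_tendsto ((hf.tendsto _).comp (tendsto_pi_nhds.2 ?_))
    ((eventually_ge_atTop 1).mono fun m hm =>
      hlaw _ (hm.trans (hN m)) fun i => ((s i).comap (φ m)).permSubgroup)
  rintro (α | β)
  · simpa only [Sum.elim_inl, ← Setoid.permSubgroup_comap_biInf, Nat.card_eq_fintype_card,
      Fintype.card_fin] using hlim (⨅ i ∈ α.1, s i)
  · simpa only [Sum.elim_inr, ← Setoid.permSubgroup_comap_biSup (hsurj _) s β.2,
      Nat.card_eq_fintype_card, Fintype.card_fin] using hlim (⨆ i ∈ β.1, s i)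

/-- If a continuous law holds for the normalized log-indices of intersections
and joins of any `n` subgroups of any symmetric group, then the same law holds
for the entropies of all joint and common information elements of any `n`
information elements on any finite probability space. -/
theorem stmt_13 (n : ℕ) (hn : 1 ≤ n)
    (f : (({α : Finset (Fin n) // α.Nonempty} ⊕ {α : Finset (Fin n) // α.Nonempty}) → ℝ) → ℝ)
    (hf : Continuous f)
    (hlaw : ∀ N : ℕ, 1 ≤ N → ∀ H : Fin n → Subgroup (Equiv.Perm (Fin N)),
      0 ≤ f (Sum.elim
        (fun α => (1 / (N : ℝ)) *
          Real.log ((Nat.factorial N : ℝ) / (Nat.card ↥(⨅ i ∈ α.1, H i) : ℝ)))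
        (fun β => (1 / (N : ℝ)) *
          Real.log ((Nat.factorial N : ℝ) / (Nat.card ↥(⨆ i ∈ β.1, H i) : ℝ))))) :
    ∀ (Ω : Type) [Fintype Ω] (p : Ω → ℝ),
      (∀ ω, 0 ≤ p ω) → ∑ ω, p ω = 1 →
      ∀ s : Fin n → Setoid Ω,
        0 ≤ f (Sum.elim
          (fun α => entropy p (⨅ i ∈ α.1, s i))
          (fun β => entropy p (⨆ i ∈ β.1, s i))) :=
  stmt_13_general n f hf hlaw
end

section
/- (Zhang–Yeung inequality.) For any finite probability space (Ω, p) and any setoids s₁, s₂, s₃, s₄ on Ω, writing h(α) := H_p(⨅_{i∈α} s_i) for α ⊆ {1,2,3,4}, the following inequality holds: 3·h({1,3}) + 3·h({1,4}) + h({2,3}) + h({2,4}) + 3·h({3,4}) ≥ h({1}) + 2·h({3}) + 2·h({4}) + h({1,2}) + 4·h({1,3,4}) + h({2,3,4}). -/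
open Finset Real

theorem Setoid.comap_inf {α β : Type*} (f : α → β) (r s : Setoid β) :
    (r ⊓ s).comap f = r.comap f ⊓ s.comap f := rfl

section Law

variable {Ω S T : Type*} [Fintype Ω] (p : Ω → ℝ)

open Classical in
noncomputable def law (f : Ω → S) (y : S) : ℝ :=
  ∑ ω ∈ univ with f ω = y, p ω

theorem law_eq_sum_ite [DecidableEq S] (f : Ω → S) (y : S) :
    law p f y = ∑ ω, if f ω = y then p ω else 0 := by
  rw [law, sum_filter]
  exact sum_congr rfl fun ω _ => by congr

theorem classProb_eq_law (s : Setoid Ω) : classProb p s = law p (Quotient.mk s) := by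
  funext c
  rw [classProb, law]
  congr

theorem law_nonneg (hp : ∀ ω, 0 ≤ p ω) (f : Ω → S) (y : S) : 0 ≤ law p f y :=
  sum_nonneg fun ω _ => hp ω

theorem le_law_apply (hp : ∀ ω, 0 ≤ p ω) (f : Ω → S) (ω : Ω) : p ω ≤ law p f (f ω) :=
  single_le_sum (fun ω _ => hp ω) (by simp)

theorem law_apply_congr {f : Ω → S} {g : Ω → T} {ω : Ω}
    (hfg : ∀ ω', f ω' = f ω ↔ g ω' = g ω) : law p f (f ω) = law p g (g ω) := by
  classical
  simp only [law_eq_sum_ite, hfg]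

theorem sum_law_mul [Fintype S] (f : Ω → S) (φ : S → ℝ) :
    ∑ y, law p f y * φ y = ∑ ω, p ω * φ (f ω) := by
  classical
  calc ∑ y, law p f y * φ y = ∑ y, ∑ ω ∈ univ with f ω = y, p ω * φ (f ω) := by
        refine sum_congr rfl fun y _ => ?_
        rw [law, sum_mul]
        exact sum_congr (by congr) fun ω hω => by rw [(mem_filter.1 hω).2]
    _ = ∑ ω, p ω * φ (f ω) := sum_fiberwise _ _ _

theorem sum_law [Fintype S] (f : Ω → S) : ∑ y, law p f y = ∑ ω, p ω := by
  simpa using sum_law_mul p f 1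

theorem law_comp [Fintype S] (e : S → T) (f : Ω → S) : law p (e ∘ f) = law (law p f) e := by
  classical
  funext z
  have h := sum_law_mul p f fun y => if e y = z then 1 else 0
  simp only [mul_ite, mul_one, mul_zero] at h
  rw [law_eq_sum_ite, law_eq_sum_ite, h]
  rfl

theorem sum_law_prod_mk [Fintype S] (h : Ω → T) (f : Ω → S) (z : T) :
    ∑ x, law p (fun ω => (h ω, f ω)) (z, x) = law p h z := by
  classical
  simp only [law_eq_sum_ite, Prod.ext_iff, ite_and]
  rw [sum_comm]
  exact sum_congr rfl fun ω _ => by split_ifs <;> simp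

theorem sum_law_mul_law_div_law {U : Type*} [Fintype S] [Fintype T] [Fintype U]
    (h : Ω → U) (f : Ω → S) (g : Ω → T) :
    ∑ v : U × S × T, law p (fun ω => (h ω, f ω)) (v.1, v.2.1) *
      law p (fun ω => (h ω, g ω)) (v.1, v.2.2) / law p h v.1 = ∑ ω, p ω := by
  calc _ = ∑ z, (∑ x, law p (fun ω => (h ω, f ω)) (z, x)) *
        (∑ y, law p (fun ω => (h ω, g ω)) (z, y)) / law p h z := by
        simp only [Fintype.sum_prod_type, sum_mul_sum, sum_div]
    _ = ∑ ω, p ω := by simp only [sum_law_prod_mk, mul_self_div_self, sum_law]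

theorem law_swap {α : Type*} [Fintype α] (q : α × α → ℝ) (x : α × α) :
    law q Prod.swap x = q x.swap := by
  classical
  simp [law_eq_sum_ite, Prod.swap_eq_iff_eq_swap]

open Classical in
theorem classProb_mk (s : Setoid Ω) (ω : Ω) :
    classProb p s ⟦ω⟧ = ∑ ω', if s ω' ω then p ω' else 0 := by
  rw [classProb_eq_law, law_eq_sum_ite]
  exact sum_congr rfl fun ω' _ => by simp only [Quotient.eq]

theorem classProb_mk_eq_law {s : Setoid Ω} {f : Ω → S} {ω : Ω}
    (h : ∀ ω', s ω' ω ↔ f ω' = f ω) : classProb p s ⟦ω⟧ = law p f (f ω) := by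
  rw [classProb_eq_law]
  exact law_apply_congr p fun ω' => Quotient.eq.trans (h ω')

theorem le_classProb_mk (hp : ∀ ω, 0 ≤ p ω) (s : Setoid Ω) (ω : Ω) : p ω ≤ classProb p s ⟦ω⟧ := by
  rw [classProb_eq_law]
  exact le_law_apply p hp _ ω

theorem classProb_mk_pos (hp : ∀ ω, 0 ≤ p ω) (s : Setoid Ω) {ω : Ω} (hω : p ω ≠ 0) :
    0 < classProb p s ⟦ω⟧ :=
  (hp ω).lt_of_ne' hω |>.trans_le (le_classProb_mk p hp s ω)

theorem entropy_eq_neg_sum (s : Setoid Ω) :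
    entropy p s = -∑ ω, p ω * log (classProb p s ⟦ω⟧) := by
  classical
  rw [entropy, classProb_eq_law]
  exact congrArg _ (sum_law_mul p _ fun c => log (law p _ c))

theorem entropy_comap {β : Type*} [Fintype β] (q : β → ℝ) (g : β → Ω) (u : Setoid Ω) :
    entropy q (u.comap g) = entropy (law q g) u := by
  have hcp : ∀ b, classProb q (u.comap g) ⟦b⟧ = classProb (law q g) u ⟦g b⟧ := fun b => by
    rw [classProb_mk_eq_law q (f := Quotient.mk u ∘ g) fun b' => Quotient.eq (r := u).symm,
      law_comp, classProb_eq_law]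
    rfl
  rw [entropy_eq_neg_sum, entropy_eq_neg_sum, sum_law_mul q g]
  simp only [hcp]

theorem entropy_congr_of_ae {r s : Setoid Ω}
    (hrs : ∀ x y, p x ≠ 0 → p y ≠ 0 → (r x y ↔ s x y)) : entropy p r = entropy p s := by
  classical
  rw [entropy_eq_neg_sum, entropy_eq_neg_sum]
  congr 1
  refine sum_congr rfl fun ω _ => ?_
  by_cases hω : p ω = 0
  · simp [hω]
  have hcp : classProb p r ⟦ω⟧ = classProb p s ⟦ω⟧ := by
    rw [classProb_mk, classProb_mk]
    refine sum_congr rfl fun ω' _ => ?_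
    by_cases hω' : p ω' = 0
    · simp [hω']
    · simp only [hrs ω' ω hω' hω]
  rw [hcp]

end Law

section Shannon

variable {Ω : Type*} [Fintype Ω] {p : Ω → ℝ}

theorem sum_mul_log_div_law_nonpos {S : Type*} [Fintype S] (hp : ∀ ω, 0 ≤ p ω)
    (F : Ω → S) (Q : S → ℝ) (hQ : ∀ y, 0 ≤ Q y) (hQsum : ∑ y, Q y ≤ ∑ ω, p ω)
    (hQpos : ∀ ω, 0 < p ω → 0 < Q (F ω)) :
    ∑ ω, p ω * log (Q (F ω) / law p F (F ω)) ≤ 0 := by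
  have hpt : ∀ ω, p ω * log (Q (F ω) / law p F (F ω)) ≤
      p ω * (Q (F ω) / law p F (F ω)) - p ω := by
    intro ω
    rcases (hp ω).eq_or_lt with h0 | hpos
    · simp [← h0]
    · have hL := hpos.trans_le (le_law_apply p hp F ω)
      have := log_le_sub_one_of_pos (div_pos (hQpos ω hpos) hL)
      nlinarith
  have hlaw : ∀ y, law p F y * (Q y / law p F y) ≤ Q y := by
    intro y
    rcases (law_nonneg p hp F y).eq_or_lt with h0 | hpos
    · simp [← h0, hQ y]
    · rw [mul_div_cancel₀ _ hpos.ne']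
  calc ∑ ω, p ω * log (Q (F ω) / law p F (F ω))
      ≤ ∑ ω, (p ω * (Q (F ω) / law p F (F ω)) - p ω) := sum_le_sum fun ω _ => hpt ω
    _ = ∑ y, law p F y * (Q y / law p F y) - ∑ ω, p ω := by
      rw [sum_sub_distrib, sum_law_mul p F fun y => Q y / law p F y]
    _ ≤ ∑ y, Q y - ∑ ω, p ω := by gcongr with y; exact hlaw y
    _ ≤ 0 := by linarith

theorem entropy_inf_inf_add_le (hp : ∀ ω, 0 ≤ p ω) (r s t : Setoid Ω) :
    entropy p (r ⊓ s ⊓ t) + entropy p t ≤ entropy p (r ⊓ t) + entropy p (s ⊓ t) := by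
  classical
  let F : Ω → Quotient t × Quotient r × Quotient s := fun ω => (⟦ω⟧, ⟦ω⟧, ⟦ω⟧)
  let A := law p fun ω => ((⟦ω⟧ : Quotient t), (⟦ω⟧ : Quotient r))
  let B := law p fun ω => ((⟦ω⟧ : Quotient t), (⟦ω⟧ : Quotient s))
  let R := law p (Quotient.mk t)
  -- the law of `F` that makes `r` and `s` conditionally independent given `t`
  let Q : Quotient t × Quotient r × Quotient s → ℝ := fun v =>
    A (v.1, v.2.1) * B (v.1, v.2.2) / R v.1
  have hA : ∀ ω, A (⟦ω⟧, ⟦ω⟧) = classProb p (r ⊓ t) ⟦ω⟧ := fun ω =>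
    (classProb_mk_eq_law p fun ω' => by simp only [Prod.ext_iff, Quotient.eq]; exact and_comm).symm
  have hB : ∀ ω, B (⟦ω⟧, ⟦ω⟧) = classProb p (s ⊓ t) ⟦ω⟧ := fun ω =>
    (classProb_mk_eq_law p fun ω' => by simp only [Prod.ext_iff, Quotient.eq]; exact and_comm).symm
  have hP : ∀ ω, law p F (F ω) = classProb p (r ⊓ s ⊓ t) ⟦ω⟧ := fun ω =>
    (classProb_mk_eq_law p fun ω' => by
      simp only [F, Prod.ext_iff, Quotient.eq]
      exact ⟨fun h => ⟨h.2, h.1⟩, fun h => ⟨h.2, h.1⟩⟩).symm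
  have hR : ∀ ω, R (Quotient.mk t ω) = classProb p t ⟦ω⟧ := fun ω =>
    (congrFun (classProb_eq_law p t) _).symm
  have hgibbs := sum_mul_log_div_law_nonpos hp F Q
    (fun v => div_nonneg (mul_nonneg (law_nonneg p hp _ _) (law_nonneg p hp _ _))
      (law_nonneg p hp _ _)) (sum_law_mul_law_div_law p _ _ _).le
    (fun ω hω => by
      simp only [Q, F, hA, hB, hR]
      have := classProb_mk_pos p hp (r ⊓ t) hω.ne'
      have := classProb_mk_pos p hp (s ⊓ t) hω.ne'
      have := classProb_mk_pos p hp t hω.ne'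
      positivity)
  have hlog : ∀ ω, p ω * log (Q (F ω) / law p F (F ω)) =
      p ω * log (classProb p (r ⊓ t) ⟦ω⟧) + p ω * log (classProb p (s ⊓ t) ⟦ω⟧) -
        p ω * log (classProb p t ⟦ω⟧) - p ω * log (classProb p (r ⊓ s ⊓ t) ⟦ω⟧) := by
    intro ω
    by_cases hω : p ω = 0
    · simp [hω]
    have h₁ := classProb_mk_pos p hp (r ⊓ t) hω
    have h₂ := classProb_mk_pos p hp (s ⊓ t) hω
    have h₃ := classProb_mk_pos p hp t hω
    have h₄ := classProb_mk_pos p hp (r ⊓ s ⊓ t) hω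
    simp only [Q, F, hA, hB, hR, hP]
    rw [log_div (by positivity) h₄.ne', log_div (by positivity) h₃.ne', log_mul h₁.ne' h₂.ne']
    ring
  simp only [hlog, sum_sub_distrib, sum_add_distrib] at hgibbs
  simp only [entropy_eq_neg_sum]
  linarith

end Shannon

theorem entropy_inf_union_add_le {Ω ι : Type*} [Fintype Ω] [DecidableEq ι] {p : Ω → ℝ}
    (hp : ∀ ω, 0 ≤ p ω) (x : ι → Setoid Ω) (U V : Finset ι) :
    entropy p ((U ∪ V).inf x) + entropy p ((U ∩ V).inf x) ≤
      entropy p (U.inf x) + entropy p (V.inf x) := by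
  have hU : U.inf x ≤ (U ∩ V).inf x := Finset.inf_mono inter_subset_left
  have hV : V.inf x ≤ (U ∩ V).inf x := Finset.inf_mono inter_subset_right
  have h := entropy_inf_inf_add_le hp (U.inf x) (V.inf x) ((U ∩ V).inf x)
  rwa [inf_eq_left.2 (inf_le_left.trans hU), inf_eq_left.2 hU, inf_eq_left.2 hV,
    ← Finset.inf_union] at h

theorem submodular_fin_five_ineq (h : Finset (Fin 5) → ℝ)
    (hsub : ∀ U V, h (U ∪ V) + h (U ∩ V) ≤ h U + h V) :
    2 * h {3} + 2 * h {4} + h {0} + h {1, 2} + h {0, 1, 3, 4} + h {0, 2, 3, 4} +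
        h {0, 1, 2, 3, 4} ≤
      h {1, 3} + h {1, 4} + h {2, 3} + h {2, 4} + 2 * h {0, 3} + 2 * h {0, 4} +
        h {1, 2, 3, 4} := by
  have hsub' : ∀ U V W X, U ∪ V = W → U ∩ V = X → h W + h X ≤ h U + h V := by
    rintro U V _ _ rfl rfl
    exact hsub U V
  linarith [hsub' {0, 1} {0, 2} {0, 1, 2} {0} (by decide) (by decide),
    hsub' {1, 3} {0, 3} {0, 1, 3} {3} (by decide) (by decide),
    hsub' {1, 4} {0, 4} {0, 1, 4} {4} (by decide) (by decide),
    hsub' {2, 3} {0, 3} {0, 2, 3} {3} (by decide) (by decide),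
    hsub' {2, 4} {0, 4} {0, 2, 4} {4} (by decide) (by decide),
    hsub' {0, 1, 3} {0, 1, 4} {0, 1, 3, 4} {0, 1} (by decide) (by decide),
    hsub' {0, 2, 3} {0, 2, 4} {0, 2, 3, 4} {0, 2} (by decide) (by decide),
    hsub' {1, 2, 3, 4} {0, 1, 2, 4} {0, 1, 2, 3, 4} {1, 2, 4} (by decide) (by decide),
    hsub' {1, 2, 4} {0, 1, 2} {0, 1, 2, 4} {1, 2} (by decide) (by decide)]

section Copy

variable {Ω : Type*} [Fintype Ω] {p : Ω → ℝ} (m : Setoid Ω)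

variable (p) in
open Classical in
/-- The joint law of `(ω, ω')` where, given the `m`-class of `ω`, the point `ω'` is drawn from `p`
restricted to that class, independently of `ω`. -/
noncomputable def copyProb (x : Ω × Ω) : ℝ :=
  if m x.1 x.2 then p x.1 * p x.2 / classProb p m ⟦x.1⟧ else 0

theorem copyProb_nonneg (hp : ∀ ω, 0 ≤ p ω) (x : Ω × Ω) : 0 ≤ copyProb p m x := by
  unfold copyProb
  split_ifs
  · exact div_nonneg (mul_nonneg (hp _) (hp _)) ((hp _).trans (le_classProb_mk p hp m _))
  · rfl

theorem rel_of_copyProb_ne_zero {x : Ω × Ω} (hx : copyProb p m x ≠ 0) : m x.1 x.2 := by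
  by_contra h
  exact hx (if_neg h)

theorem mul_ne_zero_of_copyProb_ne_zero {x : Ω × Ω} (hx : copyProb p m x ≠ 0) :
    p x.1 * p x.2 ≠ 0 := fun h => hx (by simp [copyProb, h])

theorem copyProb_swap (x : Ω × Ω) : copyProb p m x.swap = copyProb p m x := by
  classical
  obtain ⟨a, b⟩ := x
  show (if m b a then p b * p a / classProb p m ⟦b⟧ else 0) =
    if m a b then p a * p b / classProb p m ⟦a⟧ else 0
  by_cases h : m a b
  · rw [if_pos (m.symm' h), if_pos h, ← Quotient.sound (s := m) h, mul_comm (p b)]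
  · rw [if_neg (fun h' => h (m.symm' h')), if_neg h]

theorem sum_copyProb_left (hp : ∀ ω, 0 ≤ p ω) (a : Ω) : ∑ b, copyProb p m (a, b) = p a := by
  classical
  calc ∑ b, copyProb p m (a, b)
      = p a / classProb p m ⟦a⟧ * ∑ b, if m b a then p b else 0 := by
        rw [mul_sum]
        refine sum_congr rfl fun b _ => ?_
        simp only [copyProb]
        by_cases h : m a b
        · rw [if_pos h, if_pos (m.symm' h)]
          ring
        · rw [if_neg h, if_neg (fun h' => h (m.symm' h')), mul_zero]
    _ = p a := by
        rw [← classProb_mk]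
        rcases eq_or_ne (classProb p m ⟦a⟧) 0 with h0 | hne
        · have : p a = 0 := le_antisymm (h0 ▸ le_classProb_mk p hp m a) (hp a)
          simp [h0, this]
        · exact div_mul_cancel₀ _ hne

theorem law_copyProb_fst (hp : ∀ ω, 0 ≤ p ω) : law (copyProb p m) Prod.fst = p := by
  classical
  funext a
  rw [law_eq_sum_ite, Fintype.sum_prod_type, sum_eq_single a (fun b _ hb => by simp [hb]) (by simp)]
  simp [sum_copyProb_left m hp]

theorem law_copyProb_snd (hp : ∀ ω, 0 ≤ p ω) : law (copyProb p m) Prod.snd = p := by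
  have hswap : law (copyProb p m) Prod.swap = copyProb p m := by
    funext x
    rw [law_swap, copyProb_swap]
  calc law (copyProb p m) Prod.snd = law (copyProb p m) (Prod.fst ∘ Prod.swap) := rfl
    _ = p := by rw [law_comp, hswap, law_copyProb_fst m hp]

theorem entropy_copyProb_comap_fst (hp : ∀ ω, 0 ≤ p ω) (u : Setoid Ω) :
    entropy (copyProb p m) (u.comap Prod.fst) = entropy p u := by
  rw [entropy_comap, law_copyProb_fst m hp]

theorem entropy_copyProb_comap_snd (hp : ∀ ω, 0 ≤ p ω) (u : Setoid Ω) :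
    entropy (copyProb p m) (u.comap Prod.snd) = entropy p u := by
  rw [entropy_comap, law_copyProb_snd m hp]

theorem entropy_copyProb_snd_inf_fst_of_le (hp : ∀ ω, 0 ≤ p ω) {u : Setoid Ω} (hmu : m ≤ u)
    (v : Setoid Ω) :
    entropy (copyProb p m) (v.comap Prod.snd ⊓ u.comap Prod.fst) = entropy p (v ⊓ u) := by
  rw [← entropy_copyProb_comap_snd m hp (v ⊓ u)]
  refine entropy_congr_of_ae _ fun x y hx hy => and_congr_right' ?_
  have hx' : u x.1 x.2 := hmu (rel_of_copyProb_ne_zero m hx)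
  have hy' : u y.1 y.2 := hmu (rel_of_copyProb_ne_zero m hy)
  exact ⟨fun h => u.trans' (u.trans' (u.symm' hx') h) hy',
    fun h => u.trans' (u.trans' hx' h) (u.symm' hy')⟩

theorem classProb_copyProb_snd_inf_fst {u : Setoid Ω} (hum : u ≤ m) (v : Setoid Ω)
    {x : Ω × Ω} (hx : m x.1 x.2) :
    classProb (copyProb p m) (v.comap Prod.snd ⊓ u.comap Prod.fst) ⟦x⟧ =
      classProb p u ⟦x.1⟧ * classProb p (v ⊓ m) ⟦x.2⟧ / classProb p m ⟦x.1⟧ := by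
  classical
  obtain ⟨a, b⟩ := x
  rw [classProb_mk, classProb_mk, classProb_mk, sum_mul_sum, sum_div, Fintype.sum_prod_type]
  refine sum_congr rfl fun a' _ => ?_
  rw [sum_div]
  refine sum_congr rfl fun b' _ => ?_
  have hrel : (v.comap Prod.snd ⊓ u.comap Prod.fst) (a', b') (a, b) ↔ v b' b ∧ u a' a := Iff.rfl
  have hvm : (v ⊓ m) b' b ↔ v b' b ∧ m b' b := Iff.rfl
  by_cases ha : u a' a
  · have hma : m a' a := hum ha
    have hM : classProb p m ⟦a'⟧ = classProb p m ⟦a⟧ := congrArg _ (Quotient.sound hma)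
    have hmb : m a' b' ↔ m b' b :=
      ⟨fun h => m.symm' (m.trans' (m.symm' hx) (m.trans' (m.symm' hma) h)),
        fun h => m.trans' hma (m.trans' hx (m.symm' h))⟩
    simp only [hrel, hvm, copyProb, ha, hmb, hM, and_true, if_true]
    by_cases hv : v b' b <;> by_cases hm : m b' b <;> simp [hv, hm]
  · simp [hrel, ha]

theorem entropy_copyProb_snd_inf_fst_of_ge (hp : ∀ ω, 0 ≤ p ω) {u : Setoid Ω} (hum : u ≤ m)
    (v : Setoid Ω) :
    entropy (copyProb p m) (v.comap Prod.snd ⊓ u.comap Prod.fst) =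
      entropy p u + entropy p (v ⊓ m) - entropy p m := by
  have hfst : ∀ φ : Ω → ℝ, ∑ x, copyProb p m x * φ x.1 = ∑ a, p a * φ a := fun φ => by
    rw [← sum_law_mul, law_copyProb_fst m hp]
  have hsnd : ∀ φ : Ω → ℝ, ∑ x, copyProb p m x * φ x.2 = ∑ b, p b * φ b := fun φ => by
    rw [← sum_law_mul, law_copyProb_snd m hp]
  have hlog : ∀ x, copyProb p m x * log (classProb (copyProb p m)
      (v.comap Prod.snd ⊓ u.comap Prod.fst) ⟦x⟧) =
      copyProb p m x * log (classProb p u ⟦x.1⟧) + copyProb p m x * log (classProb p (v ⊓ m) ⟦x.2⟧)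
        - copyProb p m x * log (classProb p m ⟦x.1⟧) := by
    intro x
    by_cases hx : copyProb p m x = 0
    · simp [hx]
    obtain ⟨h₁, h₂⟩ := mul_ne_zero_iff.1 (mul_ne_zero_of_copyProb_ne_zero m hx)
    have hu := classProb_mk_pos p hp u h₁
    have hvm := classProb_mk_pos p hp (v ⊓ m) h₂
    rw [classProb_copyProb_snd_inf_fst m hum v (rel_of_copyProb_ne_zero m hx),
      log_div (mul_pos hu hvm).ne' (classProb_mk_pos p hp m h₁).ne', log_mul hu.ne' hvm.ne']
    ring
  simp only [entropy_eq_neg_sum, hlog, sum_add_distrib, sum_sub_distrib]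
  rw [hfst fun a => log (classProb p u ⟦a⟧), hsnd fun b => log (classProb p (v ⊓ m) ⟦b⟧),
    hfst fun a => log (classProb p m ⟦a⟧)]
  ring

end Copy

theorem stmt_19_general {Ω : Type*} [Fintype Ω] (p : Ω → ℝ) (hp : ∀ ω, 0 ≤ p ω)
    (s₁ s₂ s₃ s₄ : Setoid Ω) :
    3 * entropy p (s₁ ⊓ s₃) + 3 * entropy p (s₁ ⊓ s₄) + entropy p (s₂ ⊓ s₃) +
        entropy p (s₂ ⊓ s₄) + 3 * entropy p (s₃ ⊓ s₄) ≥
      entropy p s₁ + 2 * entropy p s₃ + 2 * entropy p s₄ + entropy p (s₁ ⊓ s₂) +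
        4 * entropy p (s₁ ⊓ s₃ ⊓ s₄) + entropy p (s₂ ⊓ s₃ ⊓ s₄) := by
  have key := submodular_fin_five_ineq
    (fun U => entropy (copyProb p (s₃ ⊓ s₄)) (U.inf ![s₁.comap Prod.snd, s₁.comap Prod.fst,
      s₂.comap Prod.fst, s₃.comap Prod.fst, s₄.comap Prod.fst]))
    (entropy_inf_union_add_le (copyProb_nonneg _ hp) _)
  simp only [Finset.inf_insert, Finset.inf_singleton, Matrix.cons_val, ← Setoid.comap_inf,
    ← inf_assoc, entropy_copyProb_comap_fst _ hp, entropy_copyProb_comap_snd _ hp] at key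
  have h₁₃ := entropy_copyProb_snd_inf_fst_of_le (s₃ ⊓ s₄) hp inf_le_left s₁
  have h₁₄ := entropy_copyProb_snd_inf_fst_of_le (s₃ ⊓ s₄) hp inf_le_right s₁
  have h₁₃₄ := entropy_copyProb_snd_inf_fst_of_ge (s₃ ⊓ s₄) hp (u := s₁ ⊓ s₃ ⊓ s₄)
    (by rw [inf_assoc]; exact inf_le_right) s₁
  have h₂₃₄ := entropy_copyProb_snd_inf_fst_of_ge (s₃ ⊓ s₄) hp (u := s₂ ⊓ s₃ ⊓ s₄)
    (by rw [inf_assoc]; exact inf_le_right) s₁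
  have h₁₂₃₄ := entropy_copyProb_snd_inf_fst_of_ge (s₃ ⊓ s₄) hp (u := s₁ ⊓ s₂ ⊓ s₃ ⊓ s₄)
    (by rw [inf_assoc]; exact inf_le_right) s₁
  rw [← inf_assoc] at h₁₃₄ h₂₃₄ h₁₂₃₄
  linarith

/-- The Zhang–Yeung non-Shannon-type information inequality in four variables,
stated for joint entropies of sample-space partitions (setoids), where the
joint information of a collection is the common refinement `⊓`. -/
theorem stmt_19 {Ω : Type*} [Fintype Ω] (p : Ω → ℝ) (hp : ∀ ω, 0 ≤ p ω)
    (hsum : ∑ ω, p ω = 1) (s₁ s₂ s₃ s₄ : Setoid Ω) :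
    3 * entropy p (s₁ ⊓ s₃) + 3 * entropy p (s₁ ⊓ s₄) + entropy p (s₂ ⊓ s₃) +
        entropy p (s₂ ⊓ s₄) + 3 * entropy p (s₃ ⊓ s₄) ≥
      entropy p s₁ + 2 * entropy p s₃ + 2 * entropy p s₄ + entropy p (s₁ ⊓ s₂) +
        4 * entropy p (s₁ ⊓ s₃ ⊓ s₄) + entropy p (s₂ ⊓ s₃ ⊓ s₄) :=
  stmt_19_general p hp s₁ s₂ s₃ s₄
end
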